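/- arXiv:2208.07251 — 5 statements merged into one kernel-verified Lean document; each statement's English description precedes it below -/
import Mathlib

section
/- Let K be a symmetric positive semi-definite kernel on a set 𝒳 with associated RKHS ℋ, let 𝒢 be the closed unit ball of ℋ, and let μ, ν be Borel probability measures on 𝒳 with ∫√K(x,x) dμ(x) < ∞ and ∫√K(x,x) dν(x) < ∞. Then MMD_𝒢(μ,ν)² = E[K(X,X')] + E[K(Y,Y')] − 2E[K(X,Y)], where X,X' ~ μ i.i.d., Y,Y' ~ ν i.i.d., and (X,X') is independent of (Y,Y'). -/
open MeasureTheory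
open scoped RealInnerProductSpace

lemma sup_ball_abs_inner {H : Type*} [NormedAddCommGroup H] [InnerProductSpace ℝ H]
    (c : H) : (⨆ f : {f : H // ‖f‖ ≤ 1}, |⟪(f : H), c⟫|) = ‖c‖ := by
  haveI : Nonempty {f : H // ‖f‖ ≤ 1} := ⟨⟨0, by simp⟩⟩
  have hbdd : ∀ f : {f : H // ‖f‖ ≤ 1}, |⟪(f : H), c⟫| ≤ ‖c‖ := by
    intro f
    calc |⟪(f : H), c⟫| ≤ ‖(f : H)‖ * ‖c‖ := abs_real_inner_le_norm _ _
    _ ≤ 1 * ‖c‖ := by gcongr; exact f.2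
    _ = ‖c‖ := one_mul _
  refine le_antisymm (ciSup_le hbdd) ?_
  rcases eq_or_ne c 0 with rfl | hc
  · simp only [norm_zero]
    have : |⟪((⟨0, by simp⟩ : {f : H // ‖f‖ ≤ 1}) : H), (0 : H)⟫| = 0 := by simp
    calc (0:ℝ) = |⟪((⟨0, by simp⟩ : {f : H // ‖f‖ ≤ 1}) : H), (0 : H)⟫| := this.symm
    _ ≤ _ := le_ciSup ⟨‖(0:H)‖, Set.forall_mem_range.2 hbdd⟩ _
  · have hcn : (0:ℝ) < ‖c‖ := norm_pos_iff.2 hc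
    have hf : ‖‖c‖⁻¹ • c‖ ≤ 1 := by
      rw [norm_smul, norm_inv, norm_norm, inv_mul_cancel₀ hcn.ne']
    have : |⟪((⟨‖c‖⁻¹ • c, hf⟩ : {f : H // ‖f‖ ≤ 1}) : H), c⟫| = ‖c‖ := by
      simp [real_inner_smul_left, real_inner_self_eq_norm_sq, abs_of_nonneg,
        pow_two, ← mul_assoc, inv_mul_cancel₀ hcn.ne']
    calc ‖c‖ = _ := this.symm
    _ ≤ _ := le_ciSup ⟨‖c‖, Set.forall_mem_range.2 hbdd⟩ _

/-- For a symmetric positive semi-definite (Mercer) kernel `K` with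
RKHS `H` (modelled by its feature map `Φ : 𝓧 → H` into a real Hilbert space,
with `K x y = ⟪Φ x, Φ y⟫` and functions of `H` acting by `f(x) = ⟪Φ x, f⟫`),
if `∫ √K(x,x) dμ < ∞` and `∫ √K(x,x) dν < ∞`, then the squared MMD over the
unit ball `𝒢` of `H` equals `E[K(X,X')] + E[K(Y,Y')] − 2 E[K(X,Y)]` where
`X, X' ∼ μ` and `Y, Y' ∼ ν` are independent. -/
theorem mmd_sq_eq_kernel_expectation
    {𝓧 : Type*} [MeasurableSpace 𝓧]
    {H : Type*} [NormedAddCommGroup H] [InnerProductSpace ℝ H] [CompleteSpace H]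
    (Φ : 𝓧 → H)
    (hΦ : ∀ μ : Measure 𝓧, AEStronglyMeasurable Φ μ)
    (K : 𝓧 → 𝓧 → ℝ)
    (hK : ∀ x y, K x y = ⟪Φ x, Φ y⟫)
    (μ ν : Measure 𝓧) [IsProbabilityMeasure μ] [IsProbabilityMeasure ν]
    (hμ : Integrable (fun x => Real.sqrt (K x x)) μ)
    (hν : Integrable (fun x => Real.sqrt (K x x)) ν) :
    (⨆ f : {f : H // ‖f‖ ≤ 1},
        |(∫ x, ⟪Φ x, (f : H)⟫ ∂μ) - ∫ x, ⟪Φ x, (f : H)⟫ ∂ν|) ^ 2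
      = (∫ x, ∫ x', K x x' ∂μ ∂μ) + (∫ y, ∫ y', K y y' ∂ν ∂ν)
        - 2 * ∫ x, ∫ y, K x y ∂ν ∂μ := by
  have hnorm : ∀ x, Real.sqrt (K x x) = ‖Φ x‖ := by
    intro x
    rw [hK, real_inner_self_eq_norm_sq, Real.sqrt_sq (norm_nonneg _)]
  have hint : ∀ (ρ : Measure 𝓧), Integrable (fun x => Real.sqrt (K x x)) ρ →
      Integrable Φ ρ := by
    intro ρ h
    rw [← integrable_norm_iff (hΦ ρ)]
    exact h.congr (Filter.Eventually.of_forall fun x => (hnorm x))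
  have hμi := hint μ hμ
  have hνi := hint ν hν
  set m : H := ∫ x, Φ x ∂μ with hm
  set n : H := ∫ x, Φ x ∂ν with hn
  have keyμ : ∀ f : H, (∫ x, ⟪Φ x, f⟫ ∂μ) = ⟪f, m⟫ := by
    intro f
    rw [hm, ← integral_inner hμi]
    exact integral_congr_ae (Filter.Eventually.of_forall fun x => real_inner_comm _ _)
  have keyν : ∀ f : H, (∫ x, ⟪Φ x, f⟫ ∂ν) = ⟪f, n⟫ := by
    intro f
    rw [hn, ← integral_inner hνi]
    exact integral_congr_ae (Filter.Eventually.of_forall fun x => real_inner_comm _ _)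
  have hsup : (⨆ f : {f : H // ‖f‖ ≤ 1},
      |(∫ x, ⟪Φ x, (f : H)⟫ ∂μ) - ∫ x, ⟪Φ x, (f : H)⟫ ∂ν|) = ‖m - n‖ := by
    rw [← sup_ball_abs_inner (m - n)]
    congr 1
    funext f
    rw [keyμ, keyν, inner_sub_right]
  have hKint : ∀ c : H, ∀ (ρ : Measure 𝓧), Integrable Φ ρ →
      (∫ x, ⟪c, Φ x⟫ ∂ρ) = ⟪c, ∫ x, Φ x ∂ρ⟫ := fun c ρ h => integral_inner h c
  have e1 : (∫ x, ∫ x', K x x' ∂μ ∂μ) = ⟪m, m⟫ := by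
    have : ∀ x, (∫ x', K x x' ∂μ) = ⟪Φ x, m⟫ := by
      intro x
      rw [hm, ← integral_inner hμi]
      exact integral_congr_ae (Filter.Eventually.of_forall fun x' => hK x x')
    rw [integral_congr_ae (Filter.Eventually.of_forall this), keyμ m]
  have e2 : (∫ y, ∫ y', K y y' ∂ν ∂ν) = ⟪n, n⟫ := by
    have : ∀ y, (∫ y', K y y' ∂ν) = ⟪Φ y, n⟫ := by
      intro y
      rw [hn, ← integral_inner hνi]
      exact integral_congr_ae (Filter.Eventually.of_forall fun y' => hK y y')
    rw [integral_congr_ae (Filter.Eventually.of_forall this), keyν n]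
  have e3 : (∫ x, ∫ y, K x y ∂ν ∂μ) = ⟪m, n⟫ := by
    have : ∀ x, (∫ y, K x y ∂ν) = ⟪Φ x, n⟫ := by
      intro x
      rw [hn, ← integral_inner hνi]
      exact integral_congr_ae (Filter.Eventually.of_forall fun y => hK x y)
    rw [integral_congr_ae (Filter.Eventually.of_forall this), keyμ n, real_inner_comm]
  rw [hsup, e1, e2, e3, ← real_inner_self_eq_norm_sq, inner_sub_sub_self]
  ring_nf
  rw [real_inner_comm n m]
  ring
end

section
/- Let (t_i)_{i=0,…,N} be a partition of [0,T] and (X_{t_i}) observations of a real-valued process. The Lévy area of the lead-lag transformation of (X_{t_i}), i.e. ½(∫_0^T (X^{lead}_t − X^{lead}_0) dX^{lag}_t − ∫_0^T (X^{lag}_t − X^{lag}_0) dX^{lead}_t), equals ½ ∑_{i=0}^{N−1} (X_{t_{i+1}} − X_{t_i})², half the quadratic variation of X over the partition. -/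
/-- The Lévy area `½(∫ (X¹ − X¹₀) dX² − ∫ (X² − X²₀) dX¹)` of the piecewise
linear planar path with vertices `P 0, P 1, …, P M`: on each linear segment the
Riemann–Stieltjes integrals are computed exactly by the trapezoid rule. -/
noncomputable def levyAreaPL (P : ℕ → ℝ × ℝ) (M : ℕ) : ℝ :=
  (1 / 2) * ∑ j ∈ Finset.range M,
    (((((P j).1 + (P (j + 1)).1) / 2 - (P 0).1) * ((P (j + 1)).2 - (P j).2))
      - ((((P j).2 + (P (j + 1)).2) / 2 - (P 0).2) * ((P (j + 1)).1 - (P j).1)))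

/-- For observations `(X_{t_i})_{i=0,…,N}` of a real-valued process,
the Lévy area of the lead-lag transformation (the piecewise linear path `P` with
vertices `P(2i) = (X_i, X_i)` at times `t_i` and `P(2i+1) = (X_{i+1}, X_i)` at
the intermediate times `t_{i+1/2}`) equals `½ ∑_{i=0}^{N−1} (X_{i+1} − X_i)²`,
half the quadratic variation of `X` over the partition. -/
theorem levy_area_lead_lag_eq_half_quadratic_variation
    (N : ℕ) (X : ℕ → ℝ) (P : ℕ → ℝ × ℝ)
    (hPeven : ∀ i ≤ N, P (2 * i) = (X i, X i))
    (hPodd : ∀ i < N, P (2 * i + 1) = (X (i + 1), X i)) :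
    levyAreaPL P (2 * N) = (1 / 2) * ∑ i ∈ Finset.range N, (X (i + 1) - X i) ^ 2 := by
  induction N with
  | zero => simp [levyAreaPL]
  | succ n ih =>
    have hi := ih (fun i h => hPeven i (by omega)) (fun i h => hPodd i (by omega))
    have e0 := hPeven 0 (by omega)
    have en := hPeven n (by omega)
    have en1 := hPeven (n + 1) le_rfl
    have hon := hPodd n (by omega)
    simp only [levyAreaPL] at hi ⊢
    rw [show 2 * (n + 1) = (2 * n + 1) + 1 from by ring, Finset.sum_range_succ,
      Finset.sum_range_succ, Finset.sum_range_succ,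
      show 2 * n + 1 + 1 = 2 * (n + 1) from by ring, en, en1, hon, e0]
    rw [e0] at hi
    simp only [Prod.fst, Prod.snd] at *
    linear_combination hi
end

section
/- Chen's identity: for X a bounded variation path on [0,t] and Y a bounded variation path on [t,T], the signature of the concatenation X*Y over [0,T] equals the tensor product of the signatures: S_{[0,T]}(X*Y) = S_{[0,t]}(X) ⊗ S_{[t,T]}(Y). -/
/-! Induction on the word, generalizing the left endpoint `a ≤ t`. For a word `i :: I` the outer
integral over `[a,T]` splits at `t`. On `(t,T)` the concatenation is `Y`, which gives
`S_{[t,T]}(Y)_{i::I}`, the term with empty `X`-word. On `(a,t)` the induction hypothesis expands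
`S_{[s,T]}(X*Y)_I` as `∑ₖ S_{[s,t]}(X)_{I≤k} · S_{[t,T]}(Y)_{I>k}`, and integrating term by term
against `dXᵢ` gives the terms whose `X`-word starts with `i`. -/

noncomputable section

/-- The signature coefficient of a path with derivative `X'` over `[a,b]`,
indexed by a word `I` of coordinates: `S_∅ = 1` and
`S_{(i::I)}[a,b] = ∫_a^b X'_i(t) · S_I[t,b] dt`, i.e. the iterated
Riemann–Stieltjes integral `∫_{a<u₁<⋯<uₙ<b} dX_{i₁}(u₁)⋯dX_{iₙ}(uₙ)`. -/
def sigCoeff (d : ℕ) (X' : ℝ → Fin d → ℝ) : List (Fin d) → ℝ → ℝ → ℝ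
  | [], _, _ => 1
  | i :: I, a, b => ∫ t in a..b, X' t i * sigCoeff d X' I t b

open MeasureTheory Set intervalIntegral

lemma sum_range_take_drop_cons {α M : Type*} [AddCommMonoid M] (F : List α → List α → M)
    (i : α) (I : List α) :
    ∑ k ∈ Finset.range ((i :: I).length + 1), F ((i :: I).take k) ((i :: I).drop k)
      = F [] (i :: I) + ∑ k ∈ Finset.range (I.length + 1), F (i :: I.take k) (I.drop k) := by
  rw [List.length_cons, Finset.sum_range_succ', add_comm]
  simp only [List.take_succ_cons, List.drop_succ_cons, List.take_zero, List.drop_zero]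

section

variable {d : ℕ}

lemma continuousOn_sigCoeff_left {W' : ℝ → Fin d → ℝ} {a b : ℝ} (hab : a ≤ b)
    (hW : ∀ i, ContinuousOn (fun s => W' s i) (Icc a b)) (I : List (Fin d)) :
    ContinuousOn (fun u => sigCoeff d W' I u b) (Icc a b) := by
  induction I with
  | nil => exact continuousOn_const
  | cons i I ih =>
    have hint : IntegrableOn (fun s => W' s i * sigCoeff d W' I s b) (uIcc a b) :=
      uIcc_of_le hab ▸ ((hW i).mul ih).integrableOn_Icc
    have h := continuousOn_primitive_interval_left hint
    rwa [uIcc_of_le hab] at h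

lemma intervalIntegrable_sigCoeff_integrand {W' : ℝ → Fin d → ℝ} {a b : ℝ} (hab : a ≤ b)
    (hW : ∀ i, ContinuousOn (fun s => W' s i) (Icc a b)) (i : Fin d) (I : List (Fin d)) :
    IntervalIntegrable (fun s => W' s i * sigCoeff d W' I s b) volume a b :=
  ((hW i).mul (continuousOn_sigCoeff_left hab hW I)).intervalIntegrable_of_Icc hab

lemma sigCoeff_congr {W' V' : ℝ → Fin d → ℝ} {a b u : ℝ} (h : EqOn W' V' (Ioo a b))
    (I : List (Fin d)) (hu : u ∈ Icc a b) : sigCoeff d W' I u b = sigCoeff d V' I u b := by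
  induction I generalizing u with
  | nil => rfl
  | cons i I ih =>
    refine integral_congr_Ioo_of_le hu.2 fun s hs => ?_
    have hs' : s ∈ Ioo a b := ⟨hu.1.trans_lt hs.1, hs.2⟩
    rw [h hs', ih ⟨hs'.1.le, hs'.2.le⟩]

theorem sigCoeff_concat {X' Y' Z' : ℝ → Fin d → ℝ} {a t T : ℝ} (hat : a ≤ t) (htT : t ≤ T)
    (hXc : ∀ i, ContinuousOn (fun s => X' s i) (Icc a t))
    (hYc : ∀ i, ContinuousOn (fun s => Y' s i) (Icc t T))
    (hZX : EqOn Z' X' (Ioo a t)) (hZY : EqOn Z' Y' (Ioo t T)) (I : List (Fin d)) :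
    sigCoeff d Z' I a T = ∑ k ∈ Finset.range (I.length + 1),
      sigCoeff d X' (I.take k) a t * sigCoeff d Y' (I.drop k) t T := by
  induction I generalizing a with
  | nil => simp [sigCoeff]
  | cons i I ih =>
    set c : ℕ → ℝ := fun k => sigCoeff d Y' (I.drop k) t T
    have hleft : EqOn (fun s => Z' s i * sigCoeff d Z' I s T)
        (fun s => ∑ k ∈ Finset.range (I.length + 1),
          X' s i * sigCoeff d X' (I.take k) s t * c k) (Ioo a t) := by
      intro s hs
      have hsub : Icc s t ⊆ Icc a t := Icc_subset_Icc_left hs.1.le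
      dsimp only
      rw [hZX hs, ih hs.2.le (fun j => (hXc j).mono hsub)
        (hZX.mono (Ioo_subset_Ioo_left hs.1.le)), Finset.mul_sum]
      simp only [mul_assoc, c]
    have hright : EqOn (fun s => Z' s i * sigCoeff d Z' I s T)
        (fun s => Y' s i * sigCoeff d Y' I s T) (Ioo t T) := fun s hs => by
      dsimp only
      rw [hZY hs, sigCoeff_congr hZY I ⟨hs.1.le, hs.2.le⟩]
    have hXint : ∀ k ∈ Finset.range (I.length + 1), IntervalIntegrable
        (fun s => X' s i * sigCoeff d X' (I.take k) s t * c k) volume a t :=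
      fun k _ => (intervalIntegrable_sigCoeff_integrand hat hXc i _).mul_const _
    have hXsum : IntervalIntegrable (fun s => ∑ k ∈ Finset.range (I.length + 1),
        X' s i * sigCoeff d X' (I.take k) s t * c k) volume a t := by
      simpa only [Finset.sum_fn] using IntervalIntegrable.sum _ hXint
    have hYint := intervalIntegrable_sigCoeff_integrand htT hYc i I
    calc sigCoeff d Z' (i :: I) a T
        = (∫ s in a..t, Z' s i * sigCoeff d Z' I s T)
            + ∫ s in t..T, Z' s i * sigCoeff d Z' I s T :=
          (integral_add_adjacent_intervals
            (hXsum.congr_uIoo (uIoo_of_le hat ▸ hleft.symm))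
            (hYint.congr_uIoo (uIoo_of_le htT ▸ hright.symm))).symm
      _ = (∑ k ∈ Finset.range (I.length + 1), sigCoeff d X' (i :: I.take k) a t * c k)
            + sigCoeff d Y' (i :: I) t T := by
          rw [integral_congr_Ioo_of_le hat hleft, integral_finsetSum hXint,
            integral_congr_Ioo_of_le htT hright]
          simp only [intervalIntegral.integral_mul_const, sigCoeff]
      _ = _ := by
          refine Eq.trans ?_ (sum_range_take_drop_cons
            (fun u v => sigCoeff d X' u a t * sigCoeff d Y' v t T) i I).symm
          simp only [sigCoeff, one_mul, add_comm, c]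

end

theorem chen_identity_general
    (d : ℕ) (t T : ℝ) (h0t : 0 ≤ t) (htT : t ≤ T)
    (X' Y' Z' : ℝ → Fin d → ℝ)
    (hXc : ∀ i : Fin d, ContinuousOn (fun s => X' s i) (Set.Icc (0:ℝ) t))
    (hYc : ∀ i : Fin d, ContinuousOn (fun s => Y' s i) (Set.Icc t T))
    (hZ' : ∀ s : ℝ, Z' s = if s ≤ t then X' s else Y' s)
    (I : List (Fin d)) :
    sigCoeff d Z' I 0 T
      = ∑ k ∈ Finset.range (I.length + 1),
          sigCoeff d X' (I.take k) 0 t * sigCoeff d Y' (I.drop k) t T := by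
  have hZX : EqOn Z' X' (Ioo 0 t) := fun s hs => by rw [hZ', if_pos hs.2.le]
  have hZY : EqOn Z' Y' (Ioo t T) := fun s hs => by rw [hZ', if_neg (not_le.mpr hs.1)]
  exact sigCoeff_concat h0t htT hXc hYc hZX hZY I

/-- Chen's identity: for `X` of bounded variation (here `C¹`) on
`[0,t]` and `Y` on `[t,T]`, the signature of the concatenation `Z = X * Y` over
`[0,T]` equals the tensor product of the signatures, i.e. in coordinates, for
every word `I`:
`S_{[0,T]}(X*Y)_I = ∑_k S_{[0,t]}(X)_{I₁…I_k} · S_{[t,T]}(Y)_{I_{k+1}…}`. -/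
theorem chen_identity
    (d : ℕ) (t T : ℝ) (h0t : 0 ≤ t) (htT : t ≤ T)
    (X Y Z : ℝ → Fin d → ℝ) (X' Y' Z' : ℝ → Fin d → ℝ)
    (hX : ∀ i : Fin d, ∀ s ∈ Set.Icc (0:ℝ) t, HasDerivAt (fun u => X u i) (X' s i) s)
    (hY : ∀ i : Fin d, ∀ s ∈ Set.Icc t T, HasDerivAt (fun u => Y u i) (Y' s i) s)
    (hXc : ∀ i : Fin d, ContinuousOn (fun s => X' s i) (Set.Icc (0:ℝ) t))
    (hYc : ∀ i : Fin d, ContinuousOn (fun s => Y' s i) (Set.Icc t T))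
    (hZ : ∀ s : ℝ, Z s = if s ≤ t then X s else fun i => X t i + Y s i - Y t i)
    (hZ' : ∀ s : ℝ, Z' s = if s ≤ t then X' s else Y' s)
    (I : List (Fin d)) :
    sigCoeff d Z' I 0 T
      = ∑ k ∈ Finset.range (I.length + 1),
          sigCoeff d X' (I.take k) 0 t * sigCoeff d Y' (I.drop k) t T :=
  chen_identity_general d t T h0t htT X' Y' Z' hXc hYc hZ' I
end
end

section
/- Let X, Y : [0,T] → ℝ be continuous one-dimensional paths with X_T − X_0 = Y_T − Y_0. Then X and Y are tree-like equivalent, i.e. the concatenation Z = X * (reverse of Y) is a tree-like path; in fact h(t) = |Z_t − Z_0| is a height function for Z. -/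
/-- if `X, Y : [0,T] → ℝ` are continuous one-dimensional paths with
`X_T − X_0 = Y_T − Y_0`, then the concatenation `Z = X * ←Y` of `X` with the
time-reversal of `Y` is a tree-like path on `[0,2T]`; in fact
`h(t) = |Z_t − Z_0|` is a height function for `Z`. -/
theorem one_dimensional_paths_tree_like_equivalent
    (T : ℝ) (hT : 0 < T)
    (X Y : ℝ → ℝ) (hXc : Continuous X) (hYc : Continuous Y)
    (hinc : X T - X 0 = Y T - Y 0)
    (Z : ℝ → ℝ)
    (hZ : ∀ s : ℝ, Z s = if s ≤ T then X s else X T + Y (2 * T - s) - Y T)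
    (h : ℝ → ℝ) (hh : ∀ s, h s = |Z s - Z 0|) :
    (∀ u, 0 ≤ h u) ∧ h 0 = 0 ∧ h (2 * T) = 0 ∧ Continuous h ∧
    (∀ s t : ℝ, 0 ≤ s → s ≤ t → t ≤ 2 * T →
      |Z t - Z s| ≤ h s + h t - 2 * sInf (h '' Set.Icc s t)) := by
  have hZcont : Continuous Z := by
    have hZfun : Z = fun s => if s ≤ T then X s else X T + Y (2 * T - s) - Y T :=
      funext hZ
    rw [hZfun]
    apply Continuous.if_le hXc (by continuity) continuous_id continuous_const
    intro x hx
    subst hx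
    simp only [id_eq]
    have h2x : 2 * x - x = x := by ring
    rw [h2x]
    ring
  have hhc : Continuous h := by
    have : h = fun s => |Z s - Z 0| := funext hh
    rw [this]
    exact (hZcont.sub continuous_const).abs
  refine ⟨fun u => by rw [hh]; exact abs_nonneg _, by simp [hh], ?_, hhc, ?_⟩
  · rw [hh, hZ (2 * T), hZ 0]
    have h2T : ¬ (2 * T ≤ T) := by linarith
    have h0T : (0 : ℝ) ≤ T := hT.le
    rw [if_neg h2T, if_pos h0T]
    have : (2 : ℝ) * T - 2 * T = 0 := by ring
    rw [this, abs_eq_zero]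
    linarith
  · intro s t hs hst h2T
    set m := sInf (h '' Set.Icc s t) with hm
    have hsmem : h s ∈ h '' Set.Icc s t := ⟨s, ⟨le_refl s, hst⟩, rfl⟩
    have htmem : h t ∈ h '' Set.Icc s t := ⟨t, ⟨hst, le_refl t⟩, rfl⟩
    have hne : (h '' Set.Icc s t).Nonempty := ⟨h s, hsmem⟩
    have hbdd : BddBelow (h '' Set.Icc s t) := by
      refine ⟨0, fun x hx => ?_⟩
      obtain ⟨u, _, rfl⟩ := hx
      rw [hh]; exact abs_nonneg _
    have hms : m ≤ h s := csInf_le hbdd hsmem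
    have hmt : m ≤ h t := csInf_le hbdd htmem
    have hm0 : 0 ≤ m := by
      apply le_csInf hne
      rintro x ⟨u, _, rfl⟩
      rw [hh]; exact abs_nonneg _
    rw [hh s] at hms
    rw [hh t] at hmt
    rw [hh s, hh t]
    set a := Z s - Z 0 with ha
    set b := Z t - Z 0 with hb
    have hab : Z t - Z s = b - a := by rw [ha, hb]; ring
    rw [hab]
    by_cases hsign : a * b < 0
    · -- opposite signs: Z - Z 0 vanishes somewhere in [s,t]
      have hgc : ContinuousOn (fun u => Z u - Z 0) (Set.Icc s t) :=
        (hZcont.sub continuous_const).continuousOn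
      have hexists : ∃ c ∈ Set.Icc s t, Z c - Z 0 = 0 := by
        rcases mul_neg_iff.mp hsign with ⟨hap, hbn⟩ | ⟨han, hbp⟩
        · have h0 : (0 : ℝ) ∈ Set.Icc (Z t - Z 0) (Z s - Z 0) := ⟨hbn.le, hap.le⟩
          have := intermediate_value_Icc' hst hgc h0
          obtain ⟨c, hc, hc0⟩ := this
          exact ⟨c, hc, hc0⟩
        · have h0 : (0 : ℝ) ∈ Set.Icc (Z s - Z 0) (Z t - Z 0) := ⟨han.le, hbp.le⟩
          have := intermediate_value_Icc hst hgc h0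
          obtain ⟨c, hc, hc0⟩ := this
          exact ⟨c, hc, hc0⟩
      obtain ⟨c, hc, hc0⟩ := hexists
      have hmc : m ≤ h c := csInf_le hbdd ⟨c, hc, rfl⟩
      have hhc0 : h c = 0 := by rw [hh, hc0, abs_zero]
      have hm00 : m = 0 := le_antisymm (by rw [hhc0] at hmc; exact hmc) hm0
      rw [hm00]
      rcases abs_cases a with ⟨h1, _⟩ | ⟨h1, _⟩ <;>
        rcases abs_cases b with ⟨h2, _⟩ | ⟨h2, _⟩ <;>
        rcases abs_cases (b - a) with ⟨h3, _⟩ | ⟨h3, _⟩ <;> linarith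
    · push_neg at hsign
      rcases le_or_gt 0 a with ha0 | ha0
      · rcases le_or_gt 0 b with hb0 | hb0
        · rw [abs_of_nonneg ha0] at hms ⊢
          rw [abs_of_nonneg hb0] at hmt ⊢
          rcases abs_cases (b - a) with ⟨h3, _⟩ | ⟨h3, _⟩ <;> linarith
        · have haz : a = 0 := by nlinarith
          have hmz : m = 0 := le_antisymm (by rw [haz, abs_zero] at hms; exact hms) hm0
          rw [haz, hmz]
          simp
      · rcases le_or_gt 0 b with hb0 | hb0
        · have hbz : b = 0 := by nlinarith
          have hmz : m = 0 := le_antisymm (by rw [hbz, abs_zero] at hmt; exact hmt) hm0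
          rw [hbz, hmz]
          simp [abs_sub_comm]
        · rw [abs_of_neg ha0] at hms ⊢
          rw [abs_of_neg hb0] at hmt ⊢
          rcases abs_cases (b - a) with ⟨h3, _⟩ | ⟨h3, _⟩ <;> linarith
end

section
/- Let (t_i)_{i=0,…,N} be a partition and (X_{t_i}) real observations. Define the cumulative sums X̃_{t_0}=0 and X̃_{t_i} = ∑_{k=0}^{i−1} X_{t_k}. Then the first signature term of the cumulative lead-lag transformation is (∑_{i=0}^{N} X_{t_i}, ∑_{i=0}^{N} X_{t_i}), and its Lévy area equals ½ ∑_{i=0}^{N} X_{t_i}², so the first two signature terms recover the empirical first and second (non-central) moments of the observations up to the factor N+1. -/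
/-- for observations `(X_{t_i})_{i=0,…,N}` with cumulative sums
`X̃_0 = 0`, `X̃_i = ∑_{k<i} X_{t_k}`, the cumulative lead-lag transformation
(the lead-lag path `P` of `(X̃_i)_{i=0,…,N+1}`, with vertices
`P(2i) = (X̃_i, X̃_i)` and `P(2i+1) = (X̃_{i+1}, X̃_i)`) has first signature term
`(∑_{i=0}^N X_{t_i}, ∑_{i=0}^N X_{t_i})` (the increment of the path) and Lévy
area `½ ∑_{i=0}^N X_{t_i}²`, recovering the empirical first and second
non-central moments of the observations up to the factor `N+1`. -/
theorem cumulative_lead_lag_moments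
    (N : ℕ) (X : ℕ → ℝ)
    (Xt : ℕ → ℝ) (hXt : ∀ i, Xt i = ∑ k ∈ Finset.range i, X k)
    (P : ℕ → ℝ × ℝ)
    (hPeven : ∀ i ≤ N + 1, P (2 * i) = (Xt i, Xt i))
    (hPodd : ∀ i < N + 1, P (2 * i + 1) = (Xt (i + 1), Xt i)) :
    (P (2 * (N + 1))).1 - (P 0).1 = ∑ i ∈ Finset.range (N + 1), X i ∧
    (P (2 * (N + 1))).2 - (P 0).2 = ∑ i ∈ Finset.range (N + 1), X i ∧
    levyAreaPL P (2 * (N + 1)) = (1 / 2) * ∑ i ∈ Finset.range (N + 1), (X i) ^ 2 := by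
  have hP0 : P 0 = (0, 0) := by
    have := hPeven 0 (by omega)
    simpa [hXt] using this
  have hPend : P (2 * (N + 1)) = (Xt (N + 1), Xt (N + 1)) := hPeven (N + 1) le_rfl
  have h1 : (P (2 * (N + 1))).1 - (P 0).1 = ∑ i ∈ Finset.range (N + 1), X i := by
    rw [hP0, hPend, hXt]; simp
  have h2 : (P (2 * (N + 1))).2 - (P 0).2 = ∑ i ∈ Finset.range (N + 1), X i := by
    rw [hP0, hPend, hXt]; simp
  refine ⟨h1, h2, ?_⟩
  unfold levyAreaPL
  congr 1
  have key : ∀ M, M ≤ N + 1 →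
      (∑ j ∈ Finset.range (2 * M),
        (((((P j).1 + (P (j + 1)).1) / 2 - (P 0).1) * ((P (j + 1)).2 - (P j).2))
          - ((((P j).2 + (P (j + 1)).2) / 2 - (P 0).2) * ((P (j + 1)).1 - (P j).1))))
        = ∑ i ∈ Finset.range M, (X i) ^ 2 := by
    intro M hM
    induction M with
    | zero => simp
    | succ m ih =>
      have hm : m ≤ N + 1 := by omega
      have hmlt : m < N + 1 := by omega
      have h2m : 2 * (m + 1) = (2 * m + 1) + 1 := by ring
      rw [h2m, Finset.sum_range_succ, Finset.sum_range_succ, ih hm, Finset.sum_range_succ]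
      have e1 : P (2 * m) = (Xt m, Xt m) := hPeven m hm
      have e2 : P (2 * m + 1) = (Xt (m + 1), Xt m) := hPodd m hmlt
      have e3 : P (2 * m + 1 + 1) = (Xt (m + 1), Xt (m + 1)) := by
        have : 2 * m + 1 + 1 = 2 * (m + 1) := by ring
        rw [this]; exact hPeven (m + 1) (by omega)
      have hinc : Xt (m + 1) = Xt m + X m := by
        rw [hXt, hXt, Finset.sum_range_succ]
      rw [e1, e2, e3, hP0, hinc]
      ring
  exact key (N + 1) le_rfl
end
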